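/- Let H be a finite-dimensional Hopf algebra over a field and let φ be a nonzero left integral on H (a functional with Σ a₍₁₎ φ(a₍₂₎) = φ(a)·1) such that the map a ↦ a·φ (where (a·φ)(b) = φ(ba)) is a linear bijection from H onto H*. Then there exists a unique element δ ∈ H such that (φ ⊗ id)(Δ(a)) = φ(a)·δ for all a ∈ H, and δ is grouplike: ε(δ) = 1 and Δ(δ) = δ ⊗ δ; moreover δ is invertible with δ⁻¹ = S(δ). -/

import Mathlib

/-!
Write `T a = (φ ⊗ id)(Δ a)`, so that `f (T a) = (φ * f)(a)` for the convolution product on `H*`.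
Left integrals are the functionals `φ` with `f * φ = f(1) φ` for all `f`, so by associativity
`φ * f` is again a left integral. When `a ↦ φ(· a)` is onto `H*`, the left integrals form the
line `k φ`: a left integral can be written `φ(q ·)`, and then the identity
`∑ S(q₁) φ(q₂ a) = ∑ a₁ φ(q a₂)` forces `(S ⊗ id)(Δ q) = 1 ⊗ q`, hence `Δ q = 1 ⊗ q` and
`q ∈ k 1`. So `φ * f = f(δ) φ` with `δ = T x₀`, `φ(x₀) = 1`, which is `T a = φ(a) δ`. Applying
`ε` and `Δ` to `δ = T x₀` shows that `δ` is grouplike, and grouplikes are inverted by `S`.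
-/

open TensorProduct

open TensorProduct (rid lid assoc)
open Coalgebra WithConv

theorem TensorProduct.ext_rid_lTensor {R M N : Type*} [CommSemiring R] [AddCommMonoid M]
    [Module R M] [AddCommMonoid N] [Module R N] [Module.Free R N] {t t' : M ⊗[R] N}
    (h : ∀ f : Module.Dual R N, rid R M (f.lTensor M t) = rid R M (f.lTensor M t')) :
    t = t' := by
  let b := Module.Free.chooseBasis R N
  have hcoord : ∀ (s : M ⊗[R] N) i,
      equivFinsuppOfBasisRight b s i = rid R M ((b.coord i).lTensor M s) := by
    intro s i
    induction s using TensorProduct.induction_on with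
    | zero => simp
    | tmul m n => simp
    | add s s' hs hs' => simp [hs, hs']
  exact (equivFinsuppOfBasisRight b).injective (Finsupp.ext fun i => by rw [hcoord, hcoord, h])

section Coalgebra

variable {k H : Type*} [CommSemiring k] [AddCommMonoid H] [Module k H] [Coalgebra k H]

theorem apply_lid_rTensor_comul (φ f : H →ₗ[k] k) (a : H) :
    f (lid k H (φ.rTensor H (comul a))) = (toConv φ * toConv f) a := by
  simp [(ℛ k a).convMul_apply, ← (ℛ k a).eq]

theorem counit_lid_rTensor_comul (φ : H →ₗ[k] k) (a : H) :
    counit (lid k H (φ.rTensor H (comul a))) = φ a := by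
  rw [apply_lid_rTensor_comul, show toConv (counit (R := k) (A := H)) = 1 from rfl, mul_one]

theorem comul_lid_rTensor_comul (φ : H →ₗ[k] k) (a : H) :
    comul (lid k H (φ.rTensor H (comul a))) =
      ((lid k H).toLinearMap ∘ₗ φ.rTensor H ∘ₗ comul).rTensor H (comul a) := by
  have hnat : comul ∘ₗ (lid k H).toLinearMap ∘ₗ φ.rTensor H =
      (lid k (H ⊗[k] H)).toLinearMap ∘ₗ φ.rTensor (H ⊗[k] H) ∘ₗ comul.lTensor H := by
    ext x y
    simp
  have hassoc : ∀ (t : H ⊗[k] H) (y : H),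
      lid k (H ⊗[k] H) (φ.rTensor (H ⊗[k] H) (assoc k H H H (t ⊗ₜ y))) =
        lid k H (φ.rTensor H t) ⊗ₜ y := by
    intro t y
    induction t using TensorProduct.induction_on with
    | zero => simp
    | tmul x z => simp [smul_tmul']
    | add t t' ht ht' => simp [add_tmul, ht, ht']
  calc comul (lid k H (φ.rTensor H (comul a)))
      = lid k (H ⊗[k] H) (φ.rTensor (H ⊗[k] H) (comul.lTensor H (comul a))) :=
        congr($hnat (comul a))
    _ = lid k (H ⊗[k] H) (φ.rTensor (H ⊗[k] H) (assoc k H H H (comul.rTensor H (comul a)))) := by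
        rw [← Coalgebra.coassoc_apply]
    _ = _ := by
        induction comul (R := k) a using TensorProduct.induction_on with
        | zero => simp
        | tmul x y => simp [hassoc]
        | add t t' ht ht' => simp only [map_add, ht, ht']

theorem isGroupLikeElem_of_lid_rTensor_comul_eq_smul {φ : H →ₗ[k] k} {δ x₀ : H}
    (hx₀ : φ x₀ = 1) (hδ : ∀ a, lid k H (φ.rTensor H (comul a)) = φ a • δ) :
    IsGroupLikeElem k δ := by
  have hδx₀ : lid k H (φ.rTensor H (comul x₀)) = δ := by rw [hδ, hx₀, one_smul]
  have hT : (lid k H).toLinearMap ∘ₗ φ.rTensor H ∘ₗ comul = φ.smulRight δ := LinearMap.ext hδ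
  have hsmul : ∀ t : H ⊗[k] H, (φ.smulRight δ).rTensor H t = δ ⊗ₜ lid k H (φ.rTensor H t) := by
    intro t
    induction t using TensorProduct.induction_on with
    | zero => simp
    | tmul x y => simp [smul_tmul]
    | add t t' ht ht' => simp [ht, ht', tmul_add]
  refine ⟨by rw [← hδx₀, counit_lid_rTensor_comul, hx₀], ?_⟩
  calc comul δ = comul (lid k H (φ.rTensor H (comul x₀))) := by rw [hδx₀]
    _ = δ ⊗ₜ lid k H (φ.rTensor H (comul x₀)) := by rw [comul_lid_rTensor_comul, hT, hsmul]
    _ = δ ⊗ₜ δ := by rw [hδx₀]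

end Coalgebra

section Bialgebra

variable {k H : Type*} [CommSemiring k] [Semiring H] [Bialgebra k H]

def IsLeftIntegral (φ : H →ₗ[k] k) : Prop :=
  ∀ a : H, rid k H (φ.lTensor H (comul a)) = φ a • (1 : H)

theorem apply_rid_lTensor_comul (φ f : H →ₗ[k] k) (a : H) :
    f (rid k H (φ.lTensor H (comul a))) = (toConv f * toConv φ) a := by
  simp [(ℛ k a).convMul_apply, ← (ℛ k a).eq, mul_comm]

theorem isLeftIntegral_iff_convMul_eq [Module.Projective k H] {φ : H →ₗ[k] k} :
    IsLeftIntegral φ ↔ ∀ f : H →ₗ[k] k, toConv f * toConv φ = f 1 • toConv φ := by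
  refine ⟨fun hφ f => ?_, fun h a => ?_⟩
  · ext a
    rw [← apply_rid_lTensor_comul, hφ]
    simp [mul_comm]
  · refine Module.eval_apply_injective k (LinearMap.ext fun f => ?_)
    simp [apply_rid_lTensor_comul, h, mul_comm]

theorem IsLeftIntegral.convMul [Module.Projective k H] {φ : H →ₗ[k] k}
    (hφ : IsLeftIntegral φ) (f : H →ₗ[k] k) : IsLeftIntegral (toConv φ * toConv f).ofConv := by
  rw [isLeftIntegral_iff_convMul_eq] at hφ ⊢
  intro g
  rw [toConv_ofConv, ← mul_assoc, hφ, smul_mul_assoc]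

theorem IsLeftIntegral.lid_rTensor_comul_eq_smul [Module.Projective k H] {φ : H →ₗ[k] k}
    (hφ : IsLeftIntegral φ) (huniq : ∀ ψ : H →ₗ[k] k, IsLeftIntegral ψ → ∃ μ : k, ψ = μ • φ)
    {x₀ : H} (hx₀ : φ x₀ = 1) (a : H) :
    lid k H (φ.rTensor H (comul a)) = φ a • lid k H (φ.rTensor H (comul x₀)) := by
  refine Module.eval_apply_injective k (LinearMap.ext fun f => ?_)
  obtain ⟨μ, hμ⟩ := huniq _ (hφ.convMul f)
  have hμx₀ : μ = f (lid k H (φ.rTensor H (comul x₀))) := by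
    simpa [hx₀, apply_lid_rTensor_comul] using congr($hμ x₀).symm
  calc f (lid k H (φ.rTensor H (comul a)))
      = (toConv φ * toConv f) a := apply_lid_rTensor_comul φ f a
    _ = μ * φ a := congr($hμ a)
    _ = f (φ a • lid k H (φ.rTensor H (comul x₀))) := by
        rw [map_smul, ← hμx₀, smul_eq_mul, mul_comm]

end Bialgebra

section Algebra

variable {k H : Type*} [CommSemiring k] [Semiring H] [Algebra k H]

theorem rid_lTensor_tmul_mul (φ : H →ₗ[k] k) (x z : H) (t : H ⊗[k] H) :
    rid k H (φ.lTensor H ((x ⊗ₜ z) * t)) =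
      x * rid k H ((φ ∘ₗ LinearMap.mulLeft k z).lTensor H t) := by
  induction t using TensorProduct.induction_on with
  | zero => simp
  | tmul b c => simp
  | add t t' ht ht' => simp [mul_add, ht, ht']

theorem mul'_map_smulRight_one (f : H →ₗ[k] k) (g : H →ₗ[k] H) (t : H ⊗[k] H) :
    LinearMap.mul' k H (map g (f.smulRight 1) t) =
      rid k H (f.lTensor H (map g LinearMap.id t)) := by
  induction t using TensorProduct.induction_on with
  | zero => simp
  | tmul b c => simp
  | add t t' ht ht' => simp [ht, ht']

end Algebra

section HopfAlgebra

variable {k H : Type*} [CommSemiring k] [Semiring H] [HopfAlgebra k H]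

theorem IsLeftIntegral.rid_lTensor_map_antipode_comul {φ : H →ₗ[k] k} (hφ : IsLeftIntegral φ)
    (q a : H) :
    rid k H ((φ ∘ₗ LinearMap.mulRight k a).lTensor H
        (map (HopfAlgebra.antipode k) LinearMap.id (comul q))) =
      rid k H ((φ ∘ₗ LinearMap.mulLeft k q).lTensor H (comul a)) := by
  -- `K z = ∑ a₁ φ(z a₂)` satisfies `id * K = φ(· a) 1`, so `S * φ(· a) 1 = S * id * K = K`.
  let K : H →ₗ[k] H := (rid k H).toLinearMap ∘ₗ φ.lTensor H ∘ₗ LinearMap.mulRight k (comul a) ∘ₗ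
    (Algebra.TensorProduct.includeRight (R := k) (A := H)).toLinearMap
  have hK : ∀ z, K z = rid k H ((φ ∘ₗ LinearMap.mulLeft k z).lTensor H (comul a)) := by
    intro z
    rw [← one_mul (rid k H _), ← rid_lTensor_tmul_mul]
    rfl
  have hidK : toConv LinearMap.id * toConv K =
      toConv ((φ ∘ₗ LinearMap.mulRight k a).smulRight 1) := by
    ext y
    have := hφ (y * a)
    rw [Bialgebra.comul_mul, ← (ℛ k y).eq, Finset.sum_mul, map_sum, map_sum] at this
    simp only [rid_lTensor_tmul_mul] at this
    simp [(ℛ k y).convMul_apply, hK, this]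
  have hSK : toConv (HopfAlgebra.antipode k) *
      toConv ((φ ∘ₗ LinearMap.mulRight k a).smulRight 1) = toConv K := by
    rw [← hidK, ← mul_assoc, LinearMap.antipode_mul_id, one_mul]
  rw [← mul'_map_smulRight_one, ← hK]
  exact congr($hSK q)

theorem eq_counit_smul_one_of_map_antipode_comul {q : H}
    (hq : map (HopfAlgebra.antipode k) LinearMap.id (comul q) = (1 : H) ⊗ₜ[k] q) :
    q = counit (R := k) q • (1 : H) := by
  -- `Θ (x ⊗ y) = ∑ x y₁ ⊗ y₂`
  let Θ : H ⊗[k] H →ₗ[k] H ⊗[k] H :=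
    (LinearMap.mul' k H).rTensor H ∘ₗ (assoc k H H H).symm.toLinearMap ∘ₗ comul.lTensor H
  have hΘ : Θ ∘ₗ map (HopfAlgebra.antipode k) LinearMap.id ∘ₗ comul = TensorProduct.mk k H H 1 := by
    simp only [Θ, coassoc_simps]
    rw [← LinearMap.rTensor_def, ← LinearMap.rTensor_def, HopfAlgebra.mul_antipode_rTensor_comul]
    ext a
    rw [LinearMap.coe_comp, Function.comp_apply, LinearMap.rTensor_comp_apply,
      Coalgebra.rTensor_counit_comul, LinearMap.rTensor_tmul]
    simp
  have hΘ_one : Θ (1 ⊗ₜ q) = comul q := by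
    change (LinearMap.mul' k H).rTensor H ((assoc k H H H).symm (1 ⊗ₜ comul q)) = _
    induction comul (R := k) q using TensorProduct.induction_on with
    | zero => simp
    | tmul x y => simp
    | add t t' ht ht' => rw [tmul_add, map_add, map_add, ht, ht']
  have hΔ : comul (R := k) q = 1 ⊗ₜ q :=
    calc comul (R := k) q = Θ (1 ⊗ₜ q) := hΘ_one.symm
      _ = Θ (map (HopfAlgebra.antipode k) LinearMap.id (comul q)) := by rw [hq]
      _ = 1 ⊗ₜ q := congr($hΘ q)
  have := congr(rid k H $(Coalgebra.lTensor_counit_comul (R := k) q))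
  rw [hΔ] at this
  simpa using this.symm

end HopfAlgebra

section Frobenius

variable {k H : Type*} [Field k] [Ring H]

theorem exists_eq_comp_mulLeft [Algebra k H] [FiniteDimensional k H] {φ : H →ₗ[k] k}
    (hφ : Function.Surjective fun a : H => φ ∘ₗ LinearMap.mulRight k a) (ψ : H →ₗ[k] k) :
    ∃ q : H, ψ = φ ∘ₗ LinearMap.mulLeft k q := by
  let L : H →ₗ[k] Module.Dual k H := (LinearMap.mul k H).compr₂ φ
  have hL : Function.Injective L := by
    refine (injective_iff_map_eq_zero L).mpr fun q hq => ?_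
    refine (Module.forall_dual_apply_eq_zero_iff k q).mp fun f => ?_
    obtain ⟨a, rfl⟩ := hφ f
    exact LinearMap.congr_fun hq a
  obtain ⟨q, hq⟩ := (LinearMap.injective_iff_surjective_of_finrank_eq_finrank
    (Subspace.dual_finrank_eq (V := H)).symm).mp hL ψ
  exact ⟨q, hq.symm⟩

theorem IsLeftIntegral.eq_smul_of_surjective [HopfAlgebra k H] [FiniteDimensional k H]
    {φ ψ : H →ₗ[k] k} (hφ : IsLeftIntegral φ)
    (hφ_surj : Function.Surjective fun a : H => φ ∘ₗ LinearMap.mulRight k a)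
    (hψ : IsLeftIntegral ψ) :
    ∃ μ : k, ψ = μ • φ := by
  obtain ⟨q, rfl⟩ := exists_eq_comp_mulLeft hφ_surj ψ
  have hq : map (HopfAlgebra.antipode k) LinearMap.id (comul q) = (1 : H) ⊗ₜ[k] q := by
    refine TensorProduct.ext_rid_lTensor fun f => ?_
    obtain ⟨a, rfl⟩ := hφ_surj f
    rw [hφ.rid_lTensor_map_antipode_comul, hψ]
    simp
  refine ⟨counit (R := k) q, LinearMap.ext fun x => ?_⟩
  rw [LinearMap.comp_apply, LinearMap.mulLeft_apply, eq_counit_smul_one_of_map_antipode_comul hq]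
  simp

end Frobenius

theorem stmt_8_general (k H : Type*) [Field k] [Ring H] [HopfAlgebra k H] [FiniteDimensional k H]
    (φ : H →ₗ[k] k)
    (hint : ∀ a : H,
      (TensorProduct.rid k H) (LinearMap.lTensor H φ (Coalgebra.comul a)) = φ a • (1 : H))
    (hbij : Function.Bijective fun a : H => φ ∘ₗ LinearMap.mulRight k a) :
    ∃ δ : H,
      (∀ a : H, (TensorProduct.lid k H) (φ.rTensor H (Coalgebra.comul a)) = φ a • δ)
      ∧ Coalgebra.counit (R := k) δ = 1
      ∧ Coalgebra.comul (R := k) δ = δ ⊗ₜ[k] δ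
      ∧ δ * HopfAlgebra.antipode (R := k) δ = 1
      ∧ HopfAlgebra.antipode (R := k) δ * δ = 1
      ∧ ∀ δ' : H,
          (∀ a : H, (TensorProduct.lid k H) (φ.rTensor H (Coalgebra.comul a)) = φ a • δ')
          → δ' = δ := by
  have hφ : IsLeftIntegral φ := hint
  obtain ⟨x₀, hx₀⟩ := hbij.surjective counit
  have hφx₀ : φ x₀ = 1 := by simpa using LinearMap.congr_fun hx₀ 1
  have hmod := hφ.lid_rTensor_comul_eq_smul (fun ψ hψ => hφ.eq_smul_of_surjective hbij.2 hψ) hφx₀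
  have hδ := isGroupLikeElem_of_lid_rTensor_comul_eq_smul hφx₀ hmod
  refine ⟨_, hmod, hδ.counit_eq_one, hδ.comul_eq_tmul_self, hδ.mul_antipode_cancel,
    hδ.antipode_mul_cancel, fun δ' hδ' => ?_⟩
  simpa [hφx₀] using (hδ' x₀).symm

/-- A finite-dimensional Hopf algebra with a nonzero left integral `φ` such that
`a ↦ a·φ` is bijective admits a unique modular (distinguished grouplike) element `δ`
with `(φ ⊗ id)(Δ a) = φ(a) δ`; moreover `δ` is grouplike and invertible with
`δ⁻¹ = S(δ)`. -/
theorem stmt_8 (k H : Type*) [Field k] [Ring H] [HopfAlgebra k H] [FiniteDimensional k H]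
    (φ : H →ₗ[k] k) (hφ0 : φ ≠ 0)
    (hint : ∀ a : H,
      (TensorProduct.rid k H) (LinearMap.lTensor H φ (Coalgebra.comul a)) = φ a • (1 : H))
    (hbij : Function.Bijective fun a : H => φ ∘ₗ LinearMap.mulRight k a) :
    ∃ δ : H,
      (∀ a : H, (TensorProduct.lid k H) (φ.rTensor H (Coalgebra.comul a)) = φ a • δ)
      ∧ Coalgebra.counit (R := k) δ = 1
      ∧ Coalgebra.comul (R := k) δ = δ ⊗ₜ[k] δ
      ∧ δ * HopfAlgebra.antipode (R := k) δ = 1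
      ∧ HopfAlgebra.antipode (R := k) δ * δ = 1
      ∧ ∀ δ' : H,
          (∀ a : H, (TensorProduct.lid k H) (φ.rTensor H (Coalgebra.comul a)) = φ a • δ')
          → δ' = δ :=
  stmt_8_general k H φ hint hbij
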